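/- Let m ∈ ℕ and let p ∈ P_m. If the evaluation of p vanishes at every point of the Korányi unit sphere S_ρ = {(x,y,t) ∈ ℝ³ : (x²+y²)² + t² = 1}, then p = 0. Consequently, the ℝ-linear restriction map from H_m to the space of real-valued functions on S_ρ is injective, and its image H_m(S_ρ) is a finite-dimensional space of dimension m + 1. -/

import Mathlib

/-!
A polynomial of weighted degree `m` satisfies `p (a x, a y, a² t) = a ^ m p (x, y, t)`, and every
nonzero point of `ℝ³` is moved onto the Korányi sphere by such a dilation. So a polynomial in
`P_m` vanishing on the sphere vanishes off the origin, hence everywhere by continuity.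

For the dimension, `Δ_H (x ^ (a + 2) y ^ b t ^ c)` is `(a + 2) (a + 1) x ^ a y ^ b t ^ c` plus
monomials of the same degree with smaller `3 c + b`; by induction on `3 c + b`, `Δ_H` maps `P_m`
onto `P_(m-2)`. Hence `dim H_m = dim P_m - dim P_(m-2)`, which is `m + 1` because a monomial of
degree `m` is either `t` times one of degree `m - 2` or one of the `m + 1` monomials
`x ^ j y ^ (m - j)`.
-/

open MvPolynomial

noncomputable section

/-- The polynomial ring ℝ[x,y,t], with x = X 0, y = X 1, t = X 2. -/
abbrev R3 := MvPolynomial (Fin 3) ℝ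

/-- The weights w(x) = w(y) = 1, w(t) = 2. -/
def w3 : Fin 3 → ℤ := ![1, 1, 2]

/-- The horizontal vector field X p = ∂ₓ p + 2 y ∂ₜ p. -/
def Xop : R3 →ₗ[ℝ] R3 :=
  (pderiv (0 : Fin 3)).toLinearMap +
    (LinearMap.mulLeft ℝ ((2 : R3) * X 1)) ∘ₗ (pderiv (2 : Fin 3)).toLinearMap

/-- The horizontal vector field Y p = ∂_y p − 2 x ∂ₜ p. -/
def Yop : R3 →ₗ[ℝ] R3 :=
  (pderiv (1 : Fin 3)).toLinearMap -
    (LinearMap.mulLeft ℝ ((2 : R3) * X 0)) ∘ₗ (pderiv (2 : Fin 3)).toLinearMap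

/-- The Heisenberg sub-Laplacian Δ_H = X² + Y². -/
def ΔH : R3 →ₗ[ℝ] R3 := Xop ∘ₗ Xop + Yop ∘ₗ Yop

/-- P_m : weighted homogeneous polynomials of degree m (ℤ-indexed, so P_m = 0 for m < 0). -/
def Pm (m : ℤ) : Submodule ℝ R3 := weightedHomogeneousSubmodule ℝ w3 m

/-- H_m : weighted homogeneous Δ_H-harmonic polynomials of degree m. -/
def Hm (m : ℤ) : Submodule ℝ R3 := Pm m ⊓ LinearMap.ker ΔH

/-- The polynomial gauge η₊² = x² + y² + 4t. -/
def etaSq : R3 := X 0 ^ 2 + X 1 ^ 2 + 4 * X 2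
/-- The Korányi unit sphere in ℝ³. -/
def Sρ : Set (Fin 3 → ℝ) := {v | (v 0 ^ 2 + v 1 ^ 2) ^ 2 + v 2 ^ 2 = 1}

/-- Restriction of harmonic polynomials to the Korányi unit sphere, as a linear map
into real-valued functions on `Sρ`. -/
def resMap (m : ℤ) : Hm m →ₗ[ℝ] (Sρ → ℝ) where
  toFun p := fun v => eval (v : Fin 3 → ℝ) (p : R3)
  map_add' p q := by funext v; simp
  map_smul' c p := by funext v; simp [MvPolynomial.smul_eval]

namespace MvPolynomial

theorem pderiv_pderiv_comm {σ R : Type*} [CommRing R] (i j : σ) (p : MvPolynomial σ R) :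
    pderiv i (pderiv j p) = pderiv j (pderiv i p) := by
  classical
  have : ⁅pderiv i, pderiv j⁆ = (0 : Derivation R (MvPolynomial σ R) (MvPolynomial σ R)) :=
    derivation_ext fun k => by
      rw [Derivation.commutator_apply, pderiv_X, pderiv_X]
      simp [Pi.single_apply, apply_ite]
  have h := congr($this p)
  rwa [Derivation.commutator_apply, Derivation.zero_apply, sub_eq_zero] at h

theorem prod_zpow_pow_eq_zpow_weight {σ K : Type*} [Field K] (w : σ → ℤ) {a : K}
    (ha : a ≠ 0) (d : σ →₀ ℕ) :
    d.prod (fun i e => (a ^ w i) ^ e) = a ^ Finsupp.weight w d := by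
  induction d using Finsupp.induction_linear with
  | zero => simp
  | add f g hf hg =>
    rw [Finsupp.prod_add_index' (by simp) (by simp [pow_add]), map_add, zpow_add₀ ha, hf, hg]
  | single i e => simp [Finsupp.weight_apply, ← zpow_natCast, ← zpow_mul, mul_comm]

theorem IsWeightedHomogeneous.eval_zpow_mul {σ K : Type*} [Field K] {w : σ → ℤ} {m : ℤ}
    {p : MvPolynomial σ K} (hp : p.IsWeightedHomogeneous w m) {a : K} (ha : a ≠ 0)
    (v : σ → K) :
    eval (fun i => a ^ w i * v i) p = a ^ m * eval v p := by
  induction hp using IsWeightedHomogeneous.induction_on with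
  | zero => simp
  | add p q _ _ hp hq => simp [hp, hq, mul_add]
  | monomial d r hd =>
    simp only [eval_monomial, mul_pow, Finsupp.prod_mul, prod_zpow_pow_eq_zpow_weight w ha, hd]
    ring

theorem finrank_weightedHomogeneousSubmodule {σ M K : Type*} [AddCommMonoid M] [Field K]
    (w : σ → M) (m : M) :
    Module.finrank K (weightedHomogeneousSubmodule K w m) =
      Nat.card {d : σ →₀ ℕ | Finsupp.weight w d = m} := by
  rw [weightedHomogeneousSubmodule_eq_finsupp_supported]
  exact Module.finrank_eq_nat_card_basis (basisRestrictSupport K _)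

end MvPolynomial

theorem weight_w3 (d : Fin 3 →₀ ℕ) : Finsupp.weight w3 d = d 0 + d 1 + 2 * d 2 := by
  simp [Finsupp.weight_apply, Finsupp.sum_fintype, Fin.sum_univ_three, w3, mul_comm]

theorem finite_setOf_weight_w3_eq (n : ℤ) :
    {d : Fin 3 →₀ ℕ | Finsupp.weight w3 d = n}.Finite :=
  (Finsupp.finite_of_degree_le n.toNat).subset fun d hd => by
    simp only [Set.mem_ofPred_eq, weight_w3] at hd
    simp only [Set.mem_ofPred_eq, Finsupp.degree_eq_sum, Fin.sum_univ_three]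
    omega

instance (n : ℤ) : FiniteDimensional ℝ (Pm n) := by
  have := (finite_setOf_weight_w3_eq n).to_subtype
  rw [Pm, weightedHomogeneousSubmodule_eq_finsupp_supported]
  exact Module.Finite.of_basis (basisRestrictSupport ℝ _)

instance (m : ℤ) : FiniteDimensional ℝ (Hm m) := Submodule.finiteDimensional_inf_left _ _

theorem mulLeft_two_mul_X_comp_pderiv_two_mem {p : R3} {n : ℤ} (hp : p ∈ Pm n) (j : Fin 3) :
    (LinearMap.mulLeft ℝ ((2 : R3) * X j) ∘ₗ (pderiv 2).toLinearMap) p ∈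
      Pm (n - 2 + w3 j) := by
  have h := ((isWeightedHomogeneous_X ℝ w3 j).C_mul 2).mul
    (hp.pderiv (i := 2) (n' := n - 2) (by simp [w3]))
  rw [map_ofNat, add_comm] at h
  exact h

theorem Xop_mem_Pm {p : R3} {n : ℤ} (hp : p ∈ Pm n) : Xop p ∈ Pm (n - 1) := by
  have h := mulLeft_two_mul_X_comp_pderiv_two_mem hp 1
  rw [show n - 2 + w3 1 = n - 1 by simp [w3]; ring] at h
  exact add_mem (hp.pderiv (by simp [w3])) h

theorem Yop_mem_Pm {p : R3} {n : ℤ} (hp : p ∈ Pm n) : Yop p ∈ Pm (n - 1) := by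
  have h := mulLeft_two_mul_X_comp_pderiv_two_mem hp 0
  rw [show n - 2 + w3 0 = n - 1 by simp [w3]; ring] at h
  exact sub_mem (hp.pderiv (by simp [w3])) h

theorem ΔH_mem_Pm {p : R3} {n : ℤ} (hp : p ∈ Pm n) : ΔH p ∈ Pm (n - 2) := by
  have h := add_mem (Xop_mem_Pm (Xop_mem_Pm hp)) (Yop_mem_Pm (Yop_mem_Pm hp))
  rwa [sub_sub, one_add_one_eq_two] at h

theorem ΔH_apply (p : R3) : ΔH p =
    pderiv 0 (pderiv 0 p) + pderiv 1 (pderiv 1 p)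
    + 4 * X 1 * pderiv 2 (pderiv 0 p) - 4 * X 0 * pderiv 2 (pderiv 1 p)
    + 4 * (X 0 ^ 2 + X 1 ^ 2) * pderiv 2 (pderiv 2 p) := by
  have h2 : ∀ i : Fin 3, pderiv i (2 : R3) = 0 := fun i => by
    rw [← map_ofNat C, pderiv_C]
  simp only [ΔH, Xop, Yop, LinearMap.add_apply, LinearMap.sub_apply, LinearMap.comp_apply,
    LinearMap.mulLeft_apply, Derivation.coeFn_coe, map_add, map_sub, pderiv_mul, h2,
    pderiv_X_of_ne, ne_eq, Fin.reduceEq, not_false_eq_true]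
  rw [pderiv_pderiv_comm 0 2 p, pderiv_pderiv_comm 1 2 p]
  ring

def xyt (a b c : ℕ) : R3 := X 0 ^ a * X 1 ^ b * X 2 ^ c

theorem xyt_mem_Pm (a b c : ℕ) : xyt a b c ∈ Pm (a + b + 2 * c : ℕ) := by
  have h := (((isWeightedHomogeneous_X ℝ w3 0).pow a).mul
    ((isWeightedHomogeneous_X ℝ w3 1).pow b)).mul ((isWeightedHomogeneous_X ℝ w3 2).pow c)
  rw [xyt]
  rwa [show a • w3 0 + b • w3 1 + c • w3 2 = (a + b + 2 * c : ℕ) by simp [w3]; ring] at h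

theorem monomial_eq_smul_xyt (d : Fin 3 →₀ ℕ) (r : ℝ) :
    monomial d r = r • xyt (d 0) (d 1) (d 2) := by
  rw [monomial_eq, smul_eq_C_mul, Finsupp.prod_fintype _ _ fun _ => pow_zero _,
    Fin.prod_univ_three, xyt]

theorem pderiv_zero_xyt (a b c : ℕ) : pderiv 0 (xyt a b c) = a • xyt (a - 1) b c := by
  simp [xyt, nsmul_eq_mul]
  ring

theorem pderiv_one_xyt (a b c : ℕ) : pderiv 1 (xyt a b c) = b • xyt a (b - 1) c := by
  simp [xyt, nsmul_eq_mul]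
  ring

theorem pderiv_two_xyt (a b c : ℕ) : pderiv 2 (xyt a b c) = c • xyt a b (c - 1) := by
  simp [xyt, nsmul_eq_mul]
  ring

-- A truncated exponent such as `b - 2` only occurs with a coefficient that is then zero.
theorem ΔH_xyt (a b c : ℕ) :
    ΔH (xyt (a + 2) b c) =
      ((a + 2) * (a + 1)) • xyt a b c + (b * (b - 1)) • xyt (a + 2) (b - 2) c
      + (4 * c * (a + 2)) • xyt (a + 1) (b + 1) (c - 1)
      - (4 * b * c) • xyt (a + 3) (b - 1) (c - 1)
      + (4 * c * (c - 1)) • xyt (a + 4) b (c - 2)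
      + (4 * c * (c - 1)) • xyt (a + 2) (b + 2) (c - 2) := by
  simp only [ΔH_apply, pderiv_zero_xyt, pderiv_one_xyt, pderiv_two_xyt, map_nsmul]
  simp only [xyt, nsmul_eq_mul, Nat.cast_mul, Nat.cast_add, Nat.cast_ofNat, Nat.sub_sub,
    Nat.reduceSubDiff, Nat.add_sub_cancel]
  ring

theorem xyt_mem_map_ΔH {k a b c : ℕ} (hk : a + b + 2 * c = k) :
    xyt a b c ∈ (Pm (k + 2 : ℕ)).map ΔH := by
  induction hn : 3 * c + b using Nat.strong_induction_on generalizing a b c with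
  | _ n ih =>
  set M := (Pm (k + 2 : ℕ)).map ΔH
  have lower : ∀ {r a' b' c' : ℕ}, (r ≠ 0 → a' + b' + 2 * c' = k ∧ 3 * c' + b' < n) →
      r • xyt a' b' c' ∈ M := by
    intro r a' b' c' h
    rcases eq_or_ne r 0 with rfl | hr
    · simp
    · obtain ⟨hk', hlt⟩ := h hr
      exact nsmul_mem (ih _ hlt hk' rfl) r
  have hΔ : ΔH (xyt (a + 2) b c) ∈ M :=
    Submodule.mem_map_of_mem (by convert xyt_mem_Pm (a + 2) b c using 3; omega)
  rw [ΔH_xyt, M.add_mem_iff_left (lower ?_), M.add_mem_iff_left (lower ?_),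
    M.sub_mem_iff_left (lower ?_), M.add_mem_iff_left (lower ?_), M.add_mem_iff_left (lower ?_),
    ← Nat.cast_smul_eq_nsmul ℝ, Submodule.smul_mem_iff _ (by positivity)] at hΔ
  · exact hΔ
  all_goals
    intro h
    simp only [ne_eq, mul_eq_zero, not_or] at h
    omega

theorem Pm_le_map_ΔH (n : ℤ) : Pm n ≤ (Pm (n + 2)).map ΔH := by
  intro p hp
  rw [p.as_sum]
  refine Submodule.sum_mem _ fun d hd => ?_
  have hw : Finsupp.weight w3 d = n := hp (mem_support_iff.mp hd)
  rw [weight_w3] at hw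
  subst hw
  rw [monomial_eq_smul_xyt]
  exact Submodule.smul_mem _ _ (by exact_mod_cast xyt_mem_map_ΔH rfl)

theorem map_ΔH_Pm (m : ℤ) : (Pm m).map ΔH = Pm (m - 2) := by
  refine le_antisymm (Submodule.map_le_iff_le_comap.mpr fun p hp => ΔH_mem_Pm hp) ?_
  simpa using Pm_le_map_ΔH (m - 2)

theorem card_weight_w3_eq (m : ℕ) :
    Nat.card {d : Fin 3 →₀ ℕ | Finsupp.weight w3 d = m} =
      Nat.card {d : Fin 3 →₀ ℕ | Finsupp.weight w3 d = m - 2} + (m + 1) := by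
  have := (finite_setOf_weight_w3_eq (m - 2)).to_subtype
  let f : {d : Fin 3 →₀ ℕ | Finsupp.weight w3 d = m - 2} ⊕ Fin (m + 1) →
      {d : Fin 3 →₀ ℕ | Finsupp.weight w3 d = m}
    | .inl d => ⟨(d : Fin 3 →₀ ℕ) + Finsupp.single 2 1, by
        have := d.2; simp only [Set.mem_ofPred_eq, weight_w3] at this ⊢; simp; omega⟩
    | .inr j => ⟨Finsupp.single 0 (j : ℕ) + Finsupp.single 1 (m - j), by
        have := j.2; simp only [Set.mem_ofPred_eq, weight_w3]; simp; omega⟩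
  have hf : Function.Bijective f := by
    constructor
    · rintro (d | j) (e | l) h <;> simp only [f, Subtype.mk.injEq] at h
      · exact congrArg _ (Subtype.ext (add_right_cancel h))
      · simpa using congr($h 2)
      · simpa using congr($h 2)
      · exact congrArg _ (Fin.ext (by simpa using congr($h 0)))
    · rintro ⟨d, hd⟩
      simp only [Set.mem_ofPred_eq, weight_w3] at hd
      by_cases h2 : d 2 = 0
      · refine ⟨.inr ⟨d 0, by omega⟩, Subtype.ext (Finsupp.ext fun i => ?_)⟩
        fin_cases i <;> simp [f] <;> omega
      · refine ⟨.inl ⟨d - Finsupp.single 2 1, ?_⟩, Subtype.ext (Finsupp.ext fun i => ?_)⟩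
        · simp only [Set.mem_ofPred_eq, weight_w3]; simp; omega
        · fin_cases i <;> simp [f]
          omega
  rw [← Nat.card_eq_of_bijective f hf, Nat.card_sum, Nat.card_fin]

theorem finrank_Pm (m : ℕ) :
    Module.finrank ℝ (Pm m) = Module.finrank ℝ (Pm (m - 2)) + (m + 1) := by
  rw [Pm, Pm, finrank_weightedHomogeneousSubmodule, finrank_weightedHomogeneousSubmodule,
    card_weight_w3_eq]

theorem finrank_Hm (m : ℕ) : Module.finrank ℝ (Hm m) = m + 1 := by
  have hker : Module.finrank ℝ (LinearMap.ker (ΔH.domRestrict (Pm m))) =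
      Module.finrank ℝ (Hm m) := by
    rw [LinearMap.ker_domRestrict,
      (Submodule.equivMapOfInjective _ (Pm m).injective_subtype _).finrank_eq,
      Submodule.map_comap_subtype]
    rfl
  have h := LinearMap.finrank_range_add_finrank_ker (ΔH.domRestrict (Pm m))
  rw [LinearMap.range_domRestrict, map_ΔH_Pm, hker, finrank_Pm] at h
  omega

theorem exists_dilation_mem_Sρ {v : Fin 3 → ℝ} (hv : v ≠ 0) :
    ∃ a : ℝ, a ≠ 0 ∧ (fun i => a ^ w3 i * v i) ∈ Sρ := by
  set N := (v 0 ^ 2 + v 1 ^ 2) ^ 2 + v 2 ^ 2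
  have hN : 0 < N := by
    by_contra! hN
    have h2 : v 2 = 0 := by nlinarith [sq_nonneg (v 0 ^ 2 + v 1 ^ 2), sq_nonneg (v 2)]
    have h01 : v 0 ^ 2 + v 1 ^ 2 = 0 := by nlinarith [sq_nonneg (v 2)]
    have h0 : v 0 = 0 := by nlinarith [sq_nonneg (v 0), sq_nonneg (v 1)]
    have h1 : v 1 = 0 := by nlinarith [sq_nonneg (v 0), sq_nonneg (v 1)]
    exact hv (funext fun i => by fin_cases i <;> assumption)
  set a := (√√N)⁻¹
  have ha4 : a ^ 4 * N = 1 := by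
    rw [inv_pow, show 4 = 2 * 2 from rfl, pow_mul, Real.sq_sqrt (by positivity),
      Real.sq_sqrt hN.le, inv_mul_cancel₀ hN.ne']
  refine ⟨a, by positivity, ?_⟩
  simp only [Sρ, Set.mem_ofPred_eq, w3]
  simp
  linear_combination ha4

theorem eq_zero_of_eval_eq_zero_on_Sρ {m : ℤ} {p : R3} (hp : p ∈ Pm m)
    (h : ∀ v ∈ Sρ, eval v p = 0) : p = 0 := by
  have hne : ∀ v ≠ 0, eval v p = 0 := fun v hv => by
    obtain ⟨a, ha, hav⟩ := exists_dilation_mem_Sρ hv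
    have h0 := h _ hav
    rw [hp.eval_zpow_mul ha] at h0
    exact (mul_eq_zero.mp h0).resolve_left (zpow_ne_zero m ha)
  have hall : (fun v => eval v p) = fun _ => 0 :=
    (continuous_eval p).ext_on (dense_compl_singleton 0) continuous_const hne
  exact MvPolynomial.funext fun v => by simpa using congrFun hall v

theorem resMap_injective (m : ℤ) : Function.Injective (resMap m) := by
  refine (injective_iff_map_eq_zero _).mpr fun p hp => Subtype.ext ?_
  exact eq_zero_of_eval_eq_zero_on_Sρ p.2.1 fun v hv => congrFun hp ⟨v, hv⟩

/-- a weighted homogeneous polynomial vanishing on the Korányi unit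
sphere is zero; hence the restriction map `H_m → (Sρ → ℝ)` is injective and its image
`H_m(S_ρ)` is finite-dimensional of dimension `m + 1`. -/
theorem stmt8 (m : ℕ) :
    (∀ p ∈ Pm (m : ℤ), (∀ v ∈ Sρ, eval v p = 0) → p = 0) ∧
    Function.Injective (resMap (m : ℤ)) ∧
    FiniteDimensional ℝ (LinearMap.range (resMap (m : ℤ))) ∧
    Module.finrank ℝ (LinearMap.range (resMap (m : ℤ))) = m + 1 := by
  have e := LinearEquiv.ofInjective _ (resMap_injective m)
  refine ⟨fun p hp => eq_zero_of_eval_eq_zero_on_Sρ hp, resMap_injective m,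
    Module.Finite.equiv e, ?_⟩
  rw [← e.finrank_eq, finrank_Hm]

end
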